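/- For the exact solution y of y' = M y + f(y) with f continuously differentiable, the local defect of the modified exponential Euler method admits the representation δ = h(φ₁(hM) − I) f(y(t₀)) + ∫₀ʰ exp((h−τ)M) ∫₀^τ (d/dσ) f(y(t₀+σ)) dσ dτ, where δ = y(t₀+h) − exp(hM) y(t₀) − h f(y(t₀)). -/

import Mathlib

/-!
Variation of constants: `t ↦ exp ((t₀ + h - t) • M) *ᵥ y t` has derivative
`exp ((t₀ + h - t) • M) *ᵥ f (y t)`, so `y (t₀ + h) - exp (h • M) *ᵥ y t₀` is the integral of
that over `[t₀, t₀ + h]`. Writing `f (y (t₀ + τ)) = f (y t₀) + ∫₀^τ (f ∘ y)'` splits it into the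
remainder term and `∫₀ʰ exp ((h - τ) • M) dτ *ᵥ f (y t₀)`, and integrating the exponential series
termwise gives `∫₀ʰ exp (s • M) ds = h • φ₁(h • M)`.
-/

open Matrix NormedSpace intervalIntegral
open Set
open MeasureTheory (volume)
open scoped Nat

/-- `φ₁(a) = (exp a - 1) / a`, as a power series. -/
noncomputable def phi1 {𝔸 : Type*} [Ring 𝔸] [Module ℝ 𝔸] [TopologicalSpace 𝔸] (a : 𝔸) : 𝔸 :=
  ∑' k : ℕ, ((k + 1)! : ℝ)⁻¹ • a ^ k

section BanachAlgebra

variable {𝔸 : Type*} [NormedRing 𝔸] [NormedAlgebra ℝ 𝔸] [CompleteSpace 𝔸]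

theorem integral_smul_pow_smul (a : 𝔸) (h : ℝ) (k : ℕ) :
    ∫ s in (0 : ℝ)..h, (k ! : ℝ)⁻¹ • (s • a) ^ k = h • (((k + 1)! : ℝ)⁻¹ • (h • a) ^ k) := by
  simp_rw [smul_pow, smul_smul]
  rw [intervalIntegral.integral_smul_const, integral_const_mul, integral_pow, Nat.factorial_succ]
  congr 1
  push_cast
  field_simp
  ring

theorem hasSum_integral_exp_smul (a : 𝔸) (h : ℝ) :
    HasSum (fun k : ℕ => h • (((k + 1)! : ℝ)⁻¹ • (h • a) ^ k))
      (∫ s in (0 : ℝ)..h, exp (s • a)) := by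
  simp_rw [← integral_smul_pow_smul]
  refine hasSum_integral_of_dominated_convergence (fun k _ => ‖(k ! : ℝ)⁻¹ • (|h| • a) ^ k‖)
    (fun k => by fun_prop) (fun k => .of_forall fun s hs => ?_)
    (.of_forall fun _ _ => norm_expSeries_summable' _) intervalIntegrable_const
    (.of_forall fun s _ => exp_series_hasSum_exp' _)
  have hs' : |s| ≤ |h| := by
    rcases le_total 0 h with h0 | h0
    · rw [uIoc_of_le h0] at hs
      exact abs_le_abs hs.2 (by linarith [hs.1])
    · rw [uIoc_of_ge h0] at hs
      exact abs_le_abs_of_nonpos hs.2 hs.1.le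
  simp only [smul_pow, norm_smul, norm_pow, Real.norm_eq_abs, abs_abs]
  gcongr

theorem integral_exp_smul (a : 𝔸) (h : ℝ) :
    ∫ s in (0 : ℝ)..h, exp (s • a) = h • phi1 (h • a) := by
  rw [phi1, ← tsum_const_smul'', (hasSum_integral_exp_smul a h).tsum_eq]

end BanachAlgebra

namespace Matrix

attribute [local instance] Matrix.linftyOpNormedAddCommGroup Matrix.linftyOpNormedSpace
  Matrix.linftyOpNormedRing Matrix.linftyOpNormedAlgebra

variable {m n : Type*} [Fintype m] [Fintype n]

/-- The topology of the `L∞` operator norm is the product topology only up to unfolding a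
definition, so instance search does not find this instance by itself. -/
noncomputable abbrev linftyOpENormedAddMonoid : ENormedAddMonoid (Matrix m n ℝ) :=
  NormedAddGroup.toENormedAddMonoid

attribute [local instance] linftyOpENormedAddMonoid

noncomputable def mulVecCLM : Matrix m n ℝ →L[ℝ] (n → ℝ) →L[ℝ] m → ℝ :=
  (mulVecBilin ℝ ℝ).mkContinuous₂ 1 fun A v => by
    simpa using linfty_opNorm_mulVec (α := ℝ) A v

theorem _root_.HasDerivAt.matrix_mulVec {A : ℝ → Matrix m n ℝ} {v : ℝ → n → ℝ}
    {A' : Matrix m n ℝ} {v' : n → ℝ} {t : ℝ} (hA : HasDerivAt A A' t) (hv : HasDerivAt v v' t) :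
    HasDerivAt (fun t => A t *ᵥ v t) (A t *ᵥ v' + A' *ᵥ v t) t :=
  mulVecCLM.hasDerivAt_of_bilinear (u := A) (v := v) (fun _ => hA) (fun _ => hv)

theorem intervalIntegral_mulVec {A : ℝ → Matrix m n ℝ} {a b : ℝ}
    (hA : IntervalIntegrable A volume a b) (v : n → ℝ) :
    ∫ t in a..b, A t *ᵥ v = (∫ t in a..b, A t) *ᵥ v :=
  ((mulVecCLM (m := m)).flip v).intervalIntegral_comp_comm hA

variable [DecidableEq n]

theorem hasDerivAt_exp_smul_mulVec (M : Matrix n n ℝ) {y : ℝ → n → ℝ} {g : n → ℝ} {c t : ℝ}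
    (hy : HasDerivAt y (M *ᵥ y t + g) t) :
    HasDerivAt (fun u => exp ((c - u) • M) *ᵥ y u) (exp ((c - t) • M) *ᵥ g) t := by
  have hE : HasDerivAt (fun u : ℝ => exp ((c - u) • M)) (-(M * exp ((c - t) • M))) t := by
    have := (hasDerivAt_exp_smul_const' M (c - t)).scomp t ((hasDerivAt_id t).const_sub c)
    simp only [Function.comp_def, neg_smul, one_smul] at this
    exact this
  convert hE.matrix_mulVec hy using 1
  rw [(Commute.exp_right ((Commute.refl M).smul_right (c - t))).eq, mulVec_add, neg_mulVec,
    ← mulVec_mulVec]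
  abel

theorem intervalIntegrable_exp_sub_smul_mulVec (M : Matrix n n ℝ) {g : ℝ → n → ℝ} {a b c : ℝ}
    (hg : ContinuousOn g (uIcc a b)) :
    IntervalIntegrable (fun t => exp ((c - t) • M) *ᵥ g t) volume a b := by
  have hE : Continuous fun t : ℝ => exp ((c - t) • M) := by fun_prop
  exact ((continuous_fst.matrix_mulVec continuous_snd).comp_continuousOn
    (hE.continuousOn.prodMk hg)).intervalIntegrable

theorem sub_exp_smul_mulVec_eq_integral (M : Matrix n n ℝ) {y g : ℝ → n → ℝ} {a b : ℝ}
    (hy : ∀ t ∈ uIcc a b, HasDerivAt y (M *ᵥ y t + g t) t) (hg : ContinuousOn g (uIcc a b)) :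
    y b - exp ((b - a) • M) *ᵥ y a = ∫ t in a..b, exp ((b - t) • M) *ᵥ g t := by
  rw [integral_eq_sub_of_hasDerivAt (fun t ht => hasDerivAt_exp_smul_mulVec M (hy t ht))
    (intervalIntegrable_exp_sub_smul_mulVec M hg)]
  simp

theorem integral_exp_smul_mulVec (M : Matrix n n ℝ) (h : ℝ) (v : n → ℝ) :
    ∫ τ in (0 : ℝ)..h, exp ((h - τ) • M) *ᵥ v = (h • phi1 (h • M)) *ᵥ v := by
  have hE : Continuous fun t : ℝ => exp ((h - t) • M) := by fun_prop
  rw [intervalIntegral_mulVec (hE.intervalIntegrable 0 h),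
    integral_comp_sub_left (fun s => exp (s • M)), sub_self, sub_zero]
  congr 1
  exact integral_exp_smul M h

end Matrix

theorem integral_deriv_comp_eq_sub {E F : Type*} [NormedAddCommGroup E] [NormedSpace ℝ E]
    [NormedAddCommGroup F] [NormedSpace ℝ F] [CompleteSpace F] {f : E → F} (hf : ContDiff ℝ 1 f)
    {z z' : ℝ → E} {a b : ℝ} (hz : ∀ t ∈ uIcc a b, HasDerivAt z (z' t) t)
    (hz' : ContinuousOn z' (uIcc a b)) :
    ∫ t in a..b, deriv (fun s => f (z s)) t = f (z b) - f (z a) := by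
  have hderiv : ∀ t ∈ uIcc a b, HasDerivAt (fun s => f (z s)) (fderiv ℝ f (z t) (z' t)) t :=
    fun t ht => (hf.differentiable one_ne_zero (z t)).hasFDerivAt.comp_hasDerivAt t (hz t ht)
  have hzc : ContinuousOn z (uIcc a b) := fun t ht => (hz t ht).continuousAt.continuousWithinAt
  have hcont : ContinuousOn (fun t => fderiv ℝ f (z t) (z' t)) (uIcc a b) :=
    ((hf.continuous_fderiv one_ne_zero).comp_continuousOn hzc).clm_apply hz'
  rw [integral_congr fun t ht => (hderiv t ht).deriv]
  exact integral_eq_sub_of_hasDerivAt hderiv hcont.intervalIntegrable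

/-- Representation of the local defect of the modified exponential Euler method. -/
theorem MVERK1_defect_representation (d : ℕ) (M : Matrix (Fin d) (Fin d) ℝ)
    (f : (Fin d → ℝ) → (Fin d → ℝ)) (hf : ContDiff ℝ 1 f)
    (y : ℝ → Fin d → ℝ) (t₀ h : ℝ) (hh : 0 < h)
    (hy : ∀ t ∈ Set.Icc t₀ (t₀ + h), HasDerivAt y (M.mulVec (y t) + f (y t)) t) :
    y (t₀ + h) - (exp (h • M)).mulVec (y t₀) - h • f (y t₀) =
      h • ((∑' k : ℕ, (((k + 1).factorial : ℝ))⁻¹ • (h • M) ^ k) -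
            (1 : Matrix (Fin d) (Fin d) ℝ)).mulVec (f (y t₀)) +
        ∫ τ in (0:ℝ)..h, (exp ((h - τ) • M)).mulVec
          (∫ σ in (0:ℝ)..τ, deriv (fun s : ℝ => f (y (t₀ + s))) σ) := by
  set z : ℝ → Fin d → ℝ := fun s => y (t₀ + s)
  have hz : ∀ s ∈ uIcc 0 h, HasDerivAt z (M *ᵥ z s + f (z s)) s := fun s hs => by
    rw [uIcc_of_le hh.le] at hs
    exact (hy (t₀ + s) ⟨by linarith [hs.1], by linarith [hs.2]⟩).comp_const_add t₀ s
  have hzc : ContinuousOn z (uIcc 0 h) := fun s hs => (hz s hs).continuousAt.continuousWithinAt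
  have hfz : ContinuousOn (fun s => f (z s)) (uIcc 0 h) := hf.continuous.comp_continuousOn hzc
  have hz' : ContinuousOn (fun s => M *ᵥ z s + f (z s)) (uIcc 0 h) :=
    ((continuous_const.matrix_mulVec continuous_id).comp_continuousOn hzc).add hfz
  have hftc : ∀ τ ∈ uIcc 0 h,
      ∫ σ in (0 : ℝ)..τ, deriv (fun s => f (z s)) σ = f (z τ) - f (z 0) := fun τ hτ =>
    integral_deriv_comp_eq_sub hf (fun s hs => hz s (uIcc_subset_uIcc_left hτ hs))
      (hz'.mono (uIcc_subset_uIcc_left hτ))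
  have hduhamel := sub_exp_smul_mulVec_eq_integral M hz hfz
  rw [sub_zero] at hduhamel
  have hremainder : ∫ τ in (0 : ℝ)..h, exp ((h - τ) • M) *ᵥ
      ∫ σ in (0 : ℝ)..τ, deriv (fun s => f (z s)) σ =
      z h - exp (h • M) *ᵥ z 0 - (h • phi1 (h • M)) *ᵥ f (z 0) := by
    have hpointwise : EqOn
        (fun τ => exp ((h - τ) • M) *ᵥ ∫ σ in (0 : ℝ)..τ, deriv (fun s => f (z s)) σ)
        (fun τ => exp ((h - τ) • M) *ᵥ f (z τ) - exp ((h - τ) • M) *ᵥ f (z 0)) (uIcc 0 h) :=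
      fun τ hτ => by simp only [hftc τ hτ, mulVec_sub]
    rw [integral_congr hpointwise,
      integral_sub (intervalIntegrable_exp_sub_smul_mulVec M hfz)
        (intervalIntegrable_exp_sub_smul_mulVec M continuousOn_const),
      hduhamel, integral_exp_smul_mulVec]
  have hz0 : z 0 = y t₀ := by simp [z]
  rw [hremainder, hz0, phi1, sub_mulVec, one_mulVec, smul_mulVec, smul_sub]
  abel
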